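/- Let G be a finite set of finite nonempty sets and h : G → {−1,1}. Then the matrix L(x,y) = Σ_{u∈G, u⊆x, u⊆y} h(u) has determinant in {−1,1} (L is unimodular). -/

import Mathlib

/-!
Ordering `G` by inclusion, `L = Zᵀ * diagonal h * Z` for the zeta matrix `Z u x = [u ⊆ x]`.
`Z` is unitriangular with respect to any linear extension of the inclusion order, so
`det L = ∏ u ∈ G, h u`, a product of signs.
-/

open Finset

namespace Matrix

def zeta (ι R : Type*) [LE ι] [DecidableLE ι] [Zero R] [One R] : Matrix ι ι R :=
  of fun i j => if i ≤ j then 1 else 0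

variable {ι R : Type*} [Fintype ι] [DecidableEq ι]

theorem zeta_transpose_mul_diagonal_mul_zeta [NonAssocSemiring R] [LE ι] [DecidableLE ι]
    (w : ι → R) :
    (zeta ι R)ᵀ * diagonal w * zeta ι R = of fun x y => ∑ u with u ≤ x ∧ u ≤ y, w u := by
  ext x y
  rw [mul_apply, of_apply, sum_filter]
  simp only [mul_diagonal, transpose_apply, zeta, of_apply]
  refine sum_congr rfl fun u _ => ?_
  split_ifs <;> simp_all

variable [CommRing R] [PartialOrder ι]

/-- A matrix supported on the order relation of a finite poset is triangular with respect to a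
linear extension of the order. -/
theorem det_eq_prod_diag_of_le (M : Matrix ι ι R) (hM : ∀ i j, M i j ≠ 0 → i ≤ j) :
    M.det = ∏ i, M i i := by
  let b : ι → LinearExtension ι := toLinearExtension
  have hb : M.BlockTriangular b := fun i j hji =>
    by_contra fun hne => (toLinearExtension.monotone (hM i j hne)).not_gt hji
  rw [hb.det, prod_image (fun i _ j _ hij => hij : Set.InjOn b _)]
  refine prod_congr rfl fun i _ => ?_
  let : Unique {j // b j = b i} := ⟨⟨⟨i, rfl⟩⟩, fun j => Subtype.ext j.2⟩
  exact (det_unique (M.toSquareBlock b (b i))).trans rfl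

variable [DecidableLE ι]

theorem det_zeta : (zeta ι R).det = 1 := by
  rw [det_eq_prod_diag_of_le (zeta ι R) fun i j hij => by_contra fun h => hij (if_neg h)]
  exact prod_eq_one fun i _ => if_pos le_rfl

theorem det_of_sum_le_and_le (w : ι → R) :
    (of fun x y => ∑ u with u ≤ x ∧ u ≤ y, w u).det = ∏ u, w u := by
  rw [← zeta_transpose_mul_diagonal_mul_zeta, det_mul, det_mul, det_transpose, det_zeta,
    det_diagonal, one_mul, mul_one]

end Matrix

open Matrix

theorem stmt_7_general (G : Finset (Finset ℕ))
    (h : Finset ℕ → ℝ) (hval : ∀ x ∈ G, h x = 1 ∨ h x = -1)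
    (L : Matrix {x // x ∈ G} {x // x ∈ G} ℝ)
    (hL : ∀ x y, L x y = ∑ u ∈ G.filter (fun u => u ⊆ x.1 ∧ u ⊆ y.1), h u) :
    L.det = 1 ∨ L.det = -1 := by
  classical
  have hL' : L = of fun x y => ∑ u : {x // x ∈ G} with u ≤ x ∧ u ≤ y, h u := by
    ext x y
    rw [hL, of_apply, sum_filter, sum_filter, ← sum_coe_sort G]
    rfl
  rw [hL', det_of_sum_le_and_le]
  refine prod_induction _ (fun p => p = 1 ∨ p = -1) ?_ (Or.inl rfl) fun u _ => hval u u.2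
  rintro a b (rfl | rfl) (rfl | rfl) <;> norm_num

theorem stmt_7 (G : Finset (Finset ℕ)) (hne : ∀ x ∈ G, x.Nonempty)
    (h : Finset ℕ → ℝ) (hval : ∀ x ∈ G, h x = 1 ∨ h x = -1)
    (L : Matrix {x // x ∈ G} {x // x ∈ G} ℝ)
    (hL : ∀ x y, L x y = ∑ u ∈ G.filter (fun u => u ⊆ x.1 ∧ u ⊆ y.1), h u) :
    L.det = 1 ∨ L.det = -1 :=
  stmt_7_general G h hval L hL
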